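/- arXiv:2511.17316 — 7 statements merged into one kernel-verified Lean document; each statement's English description precedes it below -/
import Mathlib

section
/- A linear operator Φ on π₂ is an automorphism of π₂ if and only if there exist complex numbers a₁₁, a₂₁, a₃₁, a₄₁, a₅₁, a₃₄, a₅₄ with a₁₁ ≠ 0 and a₁₁ + a₄₁ ≠ 0 such that the matrix of Φ is [[a₁₁,0,0,0,0],[a₂₁,a₁₁²,0,0,0],[a₃₁,2a₁₁a₂₁,a₁₁³,a₃₄,0],[a₄₁,0,0,a₁₁+a₄₁,0],[a₅₁,2a₁₁a₄₁+a₄₁²,0,a₅₄,(a₁₁+a₄₁)²]]. -/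
noncomputable section

/-- The multiplication of the 5-dimensional naturally graded nilpotent associative
algebra `π₂`, given on the basis `e₁, …, e₅` (indices `0, …, 4`) by
`e₁e₁ = e₂`, `e₁e₂ = e₂e₁ = e₃`, `e₁e₄ = e₄e₁ = e₅`, `e₄e₄ = e₅`. -/
def pi2Mul (x y : Fin 5 → ℂ) : Fin 5 → ℂ :=
  ![0, x 0 * y 0, x 0 * y 1 + x 1 * y 0, 0, x 0 * y 3 + x 3 * y 0 + x 3 * y 3]

/-- An automorphism of `π₂`: a bijective linear operator respecting the multiplication. -/
def IsPi2Aut (Φ : (Fin 5 → ℂ) →ₗ[ℂ] (Fin 5 → ℂ)) : Prop :=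
  Function.Bijective Φ ∧ ∀ x y, Φ (pi2Mul x y) = pi2Mul (Φ x) (Φ y)

lemma mulVec5 (M : Matrix (Fin 5) (Fin 5) ℂ) (x : Fin 5 → ℂ) (i : Fin 5) :
    M.mulVec x i = M i 0 * x 0 + M i 1 * x 1 + M i 2 * x 2 + M i 3 * x 3 + M i 4 * x 4 := by
  simp [Matrix.mulVec, dotProduct, Fin.sum_univ_five]

set_option maxHeartbeats 2000000 in
theorem pi2_aut_iff (Φ : (Fin 5 → ℂ) →ₗ[ℂ] (Fin 5 → ℂ)) :
    IsPi2Aut Φ ↔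
      ∃ a11 a21 a31 a41 a51 a34 a54 : ℂ, a11 ≠ 0 ∧ a11 + a41 ≠ 0 ∧
        LinearMap.toMatrix' Φ =
          !![a11, 0, 0, 0, 0;
             a21, a11 ^ 2, 0, 0, 0;
             a31, 2 * a11 * a21, a11 ^ 3, a34, 0;
             a41, 0, 0, a11 + a41, 0;
             a51, 2 * a11 * a41 + a41 ^ 2, 0, a54, (a11 + a41) ^ 2] := by
  constructor
  · rintro ⟨hbij, hmul⟩
    set M := LinearMap.toMatrix' Φ with hMdef
    have key : Matrix.toLin' M = Φ := Matrix.toLin'_toMatrix' Φ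
    have hΦ : ∀ x, Φ x = M.mulVec x := by
      intro x; rw [← key, Matrix.toLin'_apply]
    have h : ∀ x y, M.mulVec (pi2Mul x y) = pi2Mul (M.mulVec x) (M.mulVec y) := by
      intro x y; rw [← hΦ, ← hΦ, ← hΦ]; exact hmul x y
    have h00_0 := congrFun (h ![1,0,0,0,0] ![1,0,0,0,0]) 0
    have h00_1 := congrFun (h ![1,0,0,0,0] ![1,0,0,0,0]) 1
    have h00_2 := congrFun (h ![1,0,0,0,0] ![1,0,0,0,0]) 2
    have h00_3 := congrFun (h ![1,0,0,0,0] ![1,0,0,0,0]) 3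
    have h00_4 := congrFun (h ![1,0,0,0,0] ![1,0,0,0,0]) 4
    have h01_0 := congrFun (h ![1,0,0,0,0] ![0,1,0,0,0]) 0
    have h01_1 := congrFun (h ![1,0,0,0,0] ![0,1,0,0,0]) 1
    have h01_2 := congrFun (h ![1,0,0,0,0] ![0,1,0,0,0]) 2
    have h01_3 := congrFun (h ![1,0,0,0,0] ![0,1,0,0,0]) 3
    have h01_4 := congrFun (h ![1,0,0,0,0] ![0,1,0,0,0]) 4
    have h03_0 := congrFun (h ![1,0,0,0,0] ![0,0,0,1,0]) 0
    have h03_1 := congrFun (h ![1,0,0,0,0] ![0,0,0,1,0]) 1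
    have h03_2 := congrFun (h ![1,0,0,0,0] ![0,0,0,1,0]) 2
    have h03_3 := congrFun (h ![1,0,0,0,0] ![0,0,0,1,0]) 3
    have h03_4 := congrFun (h ![1,0,0,0,0] ![0,0,0,1,0]) 4
    have h33_1 := congrFun (h ![0,0,0,1,0] ![0,0,0,1,0]) 1
    have h33_2 := congrFun (h ![0,0,0,1,0] ![0,0,0,1,0]) 2
    have h33_4 := congrFun (h ![0,0,0,1,0] ![0,0,0,1,0]) 4
    have h13_2 := congrFun (h ![0,1,0,0,0] ![0,0,0,1,0]) 2
    simp [pi2Mul, mulVec5] at h00_0 h00_1 h00_2 h00_3 h00_4 h01_0 h01_1 h01_2 h01_3 h01_4 h03_0 h03_1 h03_2 h03_3 h03_4 h33_1 h33_2 h33_4 h13_2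
    -- M 0 0 ≠ 0
    have ha11 : M 0 0 ≠ 0 := by
      intro h0
      have hcol2 : Φ ![0,0,1,0,0] = Φ 0 := by
        rw [map_zero]
        funext i
        rw [hΦ, mulVec5]
        fin_cases i <;>
          simp [h01_0, h01_1, h01_2, h01_3, h01_4, h00_0, h00_3, h0]
      have := congrFun (hbij.injective hcol2) 2
      simp at this
    -- M 0 3 = 0
    have h03z : M 0 3 = 0 := by
      rw [h00_0, h00_1] at h13_2
      have : M 0 0 * (M 0 0 * M 0 3) = 0 := by linear_combination -h13_2
      rcases mul_eq_zero.mp this with h' | h'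
      · exact absurd h' ha11
      · rcases mul_eq_zero.mp h' with h'' | h''
        · exact absurd h'' ha11
        · exact h''
    -- M 1 3 = 0
    have h13z : M 1 3 = 0 := by
      have : M 0 0 * M 1 3 = 0 := by
        rw [h03z] at h03_2 h33_2
        linear_combination h33_2 - h03_2
      rcases mul_eq_zero.mp this with h' | h'
      · exact absurd h' ha11
      · exact h'
    -- M 3 3 ≠ 0 and M 3 3 = M 0 0 + M 3 0
    have hm33 : M 3 3 ≠ 0 := by
      intro h0
      have hcol4 : Φ ![0,0,0,0,1] = Φ 0 := by
        rw [map_zero]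
        funext i
        rw [hΦ, mulVec5]
        fin_cases i <;>
          simp [h03_0, h03_1, h03_2, h03_3, h33_4, h03z, h13z, h0]
      have := congrFun (hbij.injective hcol4) 4
      simp at this
    have hsum : M 3 3 = M 0 0 + M 3 0 := by
      apply mul_right_cancel₀ hm33
      rw [h03z] at h03_4 h33_4
      linear_combination h03_4 - h33_4
    refine ⟨M 0 0, M 1 0, M 2 0, M 3 0, M 4 0, M 2 3, M 4 3, ha11, ?_, ?_⟩
    · rw [← hsum]; exact hm33
    · ext i j
      fin_cases i <;> fin_cases j <;> simp [Matrix.vecHead, Matrix.vecTail] <;>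
        first
          | linear_combination h00_0
          | linear_combination h00_1
          | linear_combination h00_2
          | linear_combination h00_3
          | linear_combination h00_4
          | linear_combination h01_0
          | linear_combination h01_1 + M 0 0 * h00_0
          | linear_combination h01_2 + M 0 0 * h00_1 + M 1 0 * h00_0
          | linear_combination h01_3
          | linear_combination h01_4 + M 0 0 * h00_3 + M 3 0 * h00_0 + M 3 0 * h00_3
          | linear_combination h03z
          | linear_combination h13z
          | linear_combination hsum
          | linear_combination h03_0
          | linear_combination h03_1 + M 0 0 * h03z
          | linear_combination h03_2 + M 0 0 * h13z + M 1 0 * h03z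
          | linear_combination h03_3
          | linear_combination h03_4 + M 3 0 * h03z + (M 0 0 + M 3 0) * hsum
  · rintro ⟨a11, a21, a31, a41, a51, a34, a54, h1, h2, hM⟩
    have key : Matrix.toLin'
        !![a11, 0, 0, 0, 0;
           a21, a11 ^ 2, 0, 0, 0;
           a31, 2 * a11 * a21, a11 ^ 3, a34, 0;
           a41, 0, 0, a11 + a41, 0;
           a51, 2 * a11 * a41 + a41 ^ 2, 0, a54, (a11 + a41) ^ 2] = Φ := by
      rw [← hM]; exact Matrix.toLin'_toMatrix' Φ
    have hΦ : ∀ x, Φ x =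
        Matrix.mulVec !![a11, 0, 0, 0, 0;
           a21, a11 ^ 2, 0, 0, 0;
           a31, 2 * a11 * a21, a11 ^ 3, a34, 0;
           a41, 0, 0, a11 + a41, 0;
           a51, 2 * a11 * a41 + a41 ^ 2, 0, a54, (a11 + a41) ^ 2] x := by
      intro x; rw [← key, Matrix.toLin'_apply]
    constructor
    · have hinj : Function.Injective Φ := by
        intro u v huv
        rw [hΦ, hΦ] at huv
        have e0 := congrFun huv 0
        have e1 := congrFun huv 1
        have e2 := congrFun huv 2
        have e3 := congrFun huv 3
        have e4 := congrFun huv 4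
        rw [mulVec5, mulVec5] at e0 e1 e2 e3 e4
        simp [Matrix.vecHead, Matrix.vecTail, -mul_eq_mul_left_iff] at e0 e1 e2 e3 e4
        have hu0 : u 0 = v 0 := mul_left_cancel₀ h1 (by linear_combination e0)
        have hu1 : u 1 = v 1 := mul_left_cancel₀ (pow_ne_zero 2 h1)
          (by linear_combination e1 - a21 * hu0)
        have hu3 : u 3 = v 3 := mul_left_cancel₀ h2
          (by linear_combination e3 - a41 * hu0)
        have hu2 : u 2 = v 2 := mul_left_cancel₀ (pow_ne_zero 3 h1)
          (by linear_combination e2 - a31 * hu0 - (2 * a11 * a21) * hu1 - a34 * hu3)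
        have hu4 : u 4 = v 4 := mul_left_cancel₀ (pow_ne_zero 2 h2)
          (by linear_combination e4 - a51 * hu0 - (2 * a11 * a41 + a41 ^ 2) * hu1 - a54 * hu3)
        funext i
        fin_cases i <;> assumption
      exact ⟨hinj, (LinearMap.injective_iff_surjective).mp hinj⟩
    · have hmv : ∀ z : Fin 5 → ℂ,
          Matrix.mulVec !![a11, 0, 0, 0, 0;
             a21, a11 ^ 2, 0, 0, 0;
             a31, 2 * a11 * a21, a11 ^ 3, a34, 0;
             a41, 0, 0, a11 + a41, 0;
             a51, 2 * a11 * a41 + a41 ^ 2, 0, a54, (a11 + a41) ^ 2] z =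
          ![a11 * z 0,
            a21 * z 0 + a11 ^ 2 * z 1,
            a31 * z 0 + 2 * a11 * a21 * z 1 + a11 ^ 3 * z 2 + a34 * z 3,
            a41 * z 0 + (a11 + a41) * z 3,
            a51 * z 0 + (2 * a11 * a41 + a41 ^ 2) * z 1 + a54 * z 3 + (a11 + a41) ^ 2 * z 4] := by
        intro z
        funext i
        rw [mulVec5]
        fin_cases i <;> simp [Matrix.vecHead, Matrix.vecTail] <;> ring
      intro x y
      rw [hΦ, hΦ, hΦ, hmv, hmv, hmv]
      funext i
      fin_cases i <;> simp [pi2Mul] <;> ring_nf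
end
end

section
/- A linear operator Φ on π₂ is a local automorphism of π₂ if and only if there exist complex numbers b₁₁, b₂₁, b₂₂, b₃₁, b₃₂, b₃₃, b₃₄, b₄₁, b₅₁, b₅₂, b₅₄ with b₁₁·b₂₂·b₃₃·(b₄₁+b₁₁)·(b₂₂+b₅₂) ≠ 0 such that the matrix of Φ is [[b₁₁,0,0,0,0],[b₂₁,b₂₂,0,0,0],[b₃₁,b₃₂,b₃₃,b₃₄,0],[b₄₁,0,0,b₄₁+b₁₁,0],[b₅₁,b₅₂,0,b₅₄,b₂₂+b₅₂]]. -/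
noncomputable section

/-- A local automorphism of `π₂`: a linear operator that agrees at every point with
some automorphism (depending on the point). -/
def IsPi2LocAut (Φ : (Fin 5 → ℂ) →ₗ[ℂ] (Fin 5 → ℂ)) : Prop :=
  ∀ x : Fin 5 → ℂ, ∃ ψ : (Fin 5 → ℂ) →ₗ[ℂ] (Fin 5 → ℂ), IsPi2Aut ψ ∧ Φ x = ψ x

/-!
An automorphism of `π₂` is determined by the images of the generators `e₁` and `e₄`, and
the multiplication table forces `e₁ ↦ (a, b, c, d, e)`, `e₄ ↦ (0, 0, r, a + d, t)` with
`a (a + d) ≠ 0`; this gives the seven-parameter family `autMatrix`. Evaluating a local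
automorphism at the basis vectors shows that each of its columns is a column of such a
matrix, and evaluating it at `e₁ - e₄` and `e₂ - e₅` ties its diagonal entries `(4,4)` and
`(5,5)` to the first two columns. Conversely, given a matrix of the stated shape and a
vector `x`, the free parameters of an automorphism agreeing with it at `x` are solved for by
dividing by the first nonzero coordinate among `x₁, x₄, x₂`, using square and cube roots
in `ℂ`.
-/

open Matrix

def autMatrix (a b c d e r t : ℂ) : Matrix (Fin 5) (Fin 5) ℂ :=
  !![a, 0, 0, 0, 0;
     b, a ^ 2, 0, 0, 0;
     c, 2 * a * b, a ^ 3, r, 0;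
     d, 0, 0, a + d, 0;
     e, 2 * a * d + d ^ 2, 0, t, (a + d) ^ 2]

theorem autMatrix_mulVec (a b c d e r t : ℂ) (x : Fin 5 → ℂ) :
    autMatrix a b c d e r t *ᵥ x =
      ![a * x 0,
        b * x 0 + a ^ 2 * x 1,
        c * x 0 + 2 * a * b * x 1 + a ^ 3 * x 2 + r * x 3,
        d * x 0 + (a + d) * x 3,
        e * x 0 + (2 * a * d + d ^ 2) * x 1 + t * x 3 + (a + d) ^ 2 * x 4] := by
  ext i
  fin_cases i <;> simp [autMatrix, mulVec, dotProduct, Fin.sum_univ_five]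

theorem autMatrix_mulVec_pi2Mul (a b c d e r t : ℂ) (x y : Fin 5 → ℂ) :
    autMatrix a b c d e r t *ᵥ pi2Mul x y =
      pi2Mul (autMatrix a b c d e r t *ᵥ x) (autMatrix a b c d e r t *ᵥ y) := by
  simp only [autMatrix_mulVec]
  ext i
  fin_cases i <;> simp [pi2Mul] <;> ring

theorem injective_toLin'_autMatrix {a d : ℂ} (b c e r t : ℂ) (ha : a ≠ 0)
    (had : a + d ≠ 0) :
    Function.Injective (toLin' (autMatrix a b c d e r t)) := by
  intro x y hxy
  simp only [toLin'_apply, autMatrix_mulVec, vecCons_inj] at hxy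
  obtain ⟨h0, h1, h2, h3, h4, -⟩ := hxy
  have hx0 : x 0 = y 0 := mul_left_cancel₀ ha h0
  have hx3 : x 3 = y 3 := by rw [hx0] at h3; exact mul_left_cancel₀ had (add_left_cancel h3)
  have hx1 : x 1 = y 1 := by
    rw [hx0] at h1; exact mul_left_cancel₀ (pow_ne_zero 2 ha) (add_left_cancel h1)
  have hx2 : x 2 = y 2 := by
    rw [hx0, hx1, hx3] at h2
    exact mul_left_cancel₀ (pow_ne_zero 3 ha) (add_left_cancel (add_right_cancel h2))
  have hx4 : x 4 = y 4 := by
    rw [hx0, hx1, hx3] at h4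
    exact mul_left_cancel₀ (pow_ne_zero 2 had) (add_left_cancel h4)
  ext i
  fin_cases i <;> assumption

theorem isPi2Aut_toLin'_autMatrix {a d : ℂ} (b c e r t : ℂ) (ha : a ≠ 0) (had : a + d ≠ 0) :
    IsPi2Aut (toLin' (autMatrix a b c d e r t)) := by
  have hinj := injective_toLin'_autMatrix b c e r t ha had
  refine ⟨⟨hinj, LinearMap.injective_iff_surjective.1 hinj⟩, fun x y => ?_⟩
  simpa only [toLin'_apply] using autMatrix_mulVec_pi2Mul a b c d e r t x y

theorem IsPi2Aut.exists_toMatrix'_eq_autMatrix {ψ : (Fin 5 → ℂ) →ₗ[ℂ] (Fin 5 → ℂ)}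
    (hψ : IsPi2Aut ψ) :
    ∃ a b c d e r t : ℂ, a ≠ 0 ∧ a + d ≠ 0 ∧
      LinearMap.toMatrix' ψ = autMatrix a b c d e r t := by
  set u := ψ (Pi.single 0 1)
  set v := ψ (Pi.single 3 1)
  have hmul := hψ.2
  have hne (j : Fin 5) : ψ (Pi.single j 1) ≠ 0 :=
    (map_ne_zero_iff ψ hψ.1.1).2 (Pi.single_ne_zero_iff.2 one_ne_zero)
  have hψe₂ : ψ (Pi.single 1 1) = pi2Mul u u := by
    rw [← hmul]; congr 1; ext i; fin_cases i <;> simp [pi2Mul]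
  have hψe₃ : ψ (Pi.single 2 1) = pi2Mul u (pi2Mul u u) := by
    rw [← hψe₂, ← hmul]; congr 1; ext i; fin_cases i <;> simp [pi2Mul]
  have hψe₅ : ψ (Pi.single 4 1) = pi2Mul v v := by
    rw [← hmul]; congr 1; ext i; fin_cases i <;> simp [pi2Mul]
  have hψe₅' : ψ (Pi.single 4 1) = pi2Mul u v := by
    rw [← hmul]; congr 1; ext i; fin_cases i <;> simp [pi2Mul]
  have hvu : pi2Mul v (pi2Mul u u) = 0 := by
    rw [← hψe₂, ← hmul, ← map_zero ψ]; congr 1; ext i; fin_cases i <;> simp [pi2Mul]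
  have ha : u 0 ≠ 0 := by
    intro h
    apply hne 2
    rw [hψe₃]; ext i; fin_cases i <;> simp [pi2Mul, h]
  have hv₀ : v 0 = 0 := by
    simpa [pi2Mul, ha] using congrFun hvu 2
  have hv₁ : v 1 = 0 := by
    simpa [pi2Mul, hv₀, ha] using congrFun (hψe₅'.symm.trans hψe₅) 2
  have hv₃ : v 3 ≠ 0 := by
    intro h
    apply hne 4
    rw [hψe₅]; ext i; fin_cases i <;> simp [pi2Mul, hv₀, hv₁, h]
  have hv₃' : v 3 = u 0 + u 3 := by
    have h : u 0 * v 3 + u 3 * v 3 = v 3 * v 3 := by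
      simpa [pi2Mul, hv₀] using congrFun (hψe₅'.symm.trans hψe₅) 4
    exact mul_right_cancel₀ hv₃ (by linear_combination -h)
  refine ⟨u 0, u 1, u 2, u 3, u 4, v 2, v 4, ha, hv₃' ▸ hv₃, ?_⟩
  ext i j
  rw [LinearMap.toMatrix'_apply]
  fin_cases j <;> fin_cases i <;>
    simp [u, v, hψe₂, hψe₃, hψe₅, pi2Mul, autMatrix, hv₀, hv₁, hv₃'] <;> ring

theorem isPi2Aut_iff (ψ : (Fin 5 → ℂ) →ₗ[ℂ] (Fin 5 → ℂ)) :
    IsPi2Aut ψ ↔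
      ∃ a b c d e r t : ℂ, a ≠ 0 ∧ a + d ≠ 0 ∧
        LinearMap.toMatrix' ψ = autMatrix a b c d e r t := by
  refine ⟨IsPi2Aut.exists_toMatrix'_eq_autMatrix, ?_⟩
  rintro ⟨a, b, c, d, e, r, t, ha, had, hψ⟩
  rw [← toLin'_toMatrix' ψ, hψ]
  exact isPi2Aut_toLin'_autMatrix b c e r t ha had

def IsLocAutMatrix (M : Matrix (Fin 5) (Fin 5) ℂ) : Prop :=
  ∀ x, ∃ a b c d e r t : ℂ,
    a ≠ 0 ∧ a + d ≠ 0 ∧ M *ᵥ x = autMatrix a b c d e r t *ᵥ x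

theorem isPi2LocAut_iff_isLocAutMatrix (Φ : (Fin 5 → ℂ) →ₗ[ℂ] (Fin 5 → ℂ)) :
    IsPi2LocAut Φ ↔ IsLocAutMatrix (LinearMap.toMatrix' Φ) := by
  refine forall_congr' fun x => ⟨?_, ?_⟩
  · rintro ⟨ψ, hψ, hx⟩
    obtain ⟨a, b, c, d, e, r, t, ha, had, hψ'⟩ := (isPi2Aut_iff ψ).1 hψ
    refine ⟨a, b, c, d, e, r, t, ha, had, ?_⟩
    rw [← hψ', LinearMap.toMatrix'_mulVec, LinearMap.toMatrix'_mulVec, hx]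
  · rintro ⟨a, b, c, d, e, r, t, ha, had, hx⟩
    refine ⟨toLin' (autMatrix a b c d e r t), isPi2Aut_toLin'_autMatrix b c e r t ha had, ?_⟩
    rw [toLin'_apply, ← hx, LinearMap.toMatrix'_mulVec]

def locAutMatrix (b11 b21 b22 b31 b32 b33 b34 b41 b51 b52 b54 : ℂ) : Matrix (Fin 5) (Fin 5) ℂ :=
  !![b11, 0, 0, 0, 0;
     b21, b22, 0, 0, 0;
     b31, b32, b33, b34, 0;
     b41, 0, 0, b41 + b11, 0;
     b51, b52, 0, b54, b22 + b52]

theorem locAutMatrix_mulVec (b11 b21 b22 b31 b32 b33 b34 b41 b51 b52 b54 : ℂ)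
    (x : Fin 5 → ℂ) :
    locAutMatrix b11 b21 b22 b31 b32 b33 b34 b41 b51 b52 b54 *ᵥ x =
      ![b11 * x 0,
        b21 * x 0 + b22 * x 1,
        b31 * x 0 + b32 * x 1 + b33 * x 2 + b34 * x 3,
        b41 * x 0 + (b41 + b11) * x 3,
        b51 * x 0 + b52 * x 1 + b54 * x 3 + (b22 + b52) * x 4] := by
  ext i
  fin_cases i <;> simp [locAutMatrix, mulVec, dotProduct, Fin.sum_univ_five]

namespace IsLocAutMatrix

variable {M : Matrix (Fin 5) (Fin 5) ℂ}

theorem exists_col (hM : IsLocAutMatrix M) (j : Fin 5) :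
    ∃ a b c d e r t : ℂ, a ≠ 0 ∧ a + d ≠ 0 ∧
      ∀ i, M i j = autMatrix a b c d e r t i j := by
  obtain ⟨a, b, c, d, e, r, t, ha, had, h⟩ := hM (Pi.single j 1)
  simp only [mulVec_single_one] at h
  exact ⟨a, b, c, d, e, r, t, ha, had, congrFun h⟩

theorem apply_three_three (hM : IsLocAutMatrix M) (h03 : M 0 3 = 0) :
    M 3 3 = M 3 0 + M 0 0 := by
  obtain ⟨a, b, c, d, e, r, t, -, -, h⟩ := hM (Pi.single 0 1 - Pi.single 3 1)
  simp only [mulVec_sub, mulVec_single_one] at h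
  have h0 : M 0 0 - M 0 3 = a := by simpa [autMatrix] using congrFun h 0
  have h3 : M 3 0 - M 3 3 = -a := by simpa [autMatrix] using congrFun h 3
  linear_combination -h0 - h3 - h03

theorem apply_four_four (hM : IsLocAutMatrix M) (h14 : M 1 4 = 0) :
    M 4 4 = M 1 1 + M 4 1 := by
  obtain ⟨a, b, c, d, e, r, t, -, -, h⟩ := hM (Pi.single 1 1 - Pi.single 4 1)
  simp only [mulVec_sub, mulVec_single_one] at h
  have h1 : M 1 1 - M 1 4 = a ^ 2 := by simpa [autMatrix] using congrFun h 1
  have h4 : M 4 1 - M 4 4 = 2 * a * d + d ^ 2 - (a + d) ^ 2 := by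
    simpa [autMatrix] using congrFun h 4
  linear_combination -h1 - h4 - h14

theorem exists_eq_locAutMatrix (hM : IsLocAutMatrix M) :
    ∃ b11 b21 b22 b31 b32 b33 b34 b41 b51 b52 b54 : ℂ,
      b11 * b22 * b33 * (b41 + b11) * (b22 + b52) ≠ 0 ∧
      M = locAutMatrix b11 b21 b22 b31 b32 b33 b34 b41 b51 b52 b54 := by
  obtain ⟨a₀, _, _, d₀, _, _, _, ha₀, had₀, h₀⟩ := hM.exists_col 0
  obtain ⟨a₁, _, _, d₁, _, _, _, ha₁, had₁, h₁⟩ := hM.exists_col 1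
  obtain ⟨a₂, _, _, _, _, _, _, ha₂, -, h₂⟩ := hM.exists_col 2
  obtain ⟨_, _, _, _, _, _, _, -, -, h₃⟩ := hM.exists_col 3
  obtain ⟨_, _, _, _, _, _, _, -, -, h₄⟩ := hM.exists_col 4
  simp only [Fin.forall_fin_succ, autMatrix, of_apply, cons_val', cons_val_zero,
    cons_val_fin_one, Fin.succ_zero_eq_one, cons_val_one, Fin.succ_one_eq_two, cons_val,
    Fin.reduceSucc, cons_val_succ, IsEmpty.forall_iff, and_true] at h₀ h₁ h₂ h₃ h₄
  obtain ⟨h00, -, -, h30, -⟩ := h₀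
  obtain ⟨h01, h11, -, h31, h41⟩ := h₁
  obtain ⟨h02, h12, h22, h32, h42⟩ := h₂
  obtain ⟨h03, h13, -, -, -⟩ := h₃
  obtain ⟨h04, h14, h24, h34, -⟩ := h₄
  refine ⟨M 0 0, M 1 0, M 1 1, M 2 0, M 2 1, M 2 2, M 2 3, M 3 0, M 4 0, M 4 1, M 4 3, ?_, ?_⟩
  · have hsq : a₁ ^ 2 + (2 * a₁ * d₁ + d₁ ^ 2) = (a₁ + d₁) ^ 2 := by ring
    rw [h00, h11, h22, h30, h41, hsq, add_comm d₀]
    simp [ha₀, ha₁, ha₂, had₀, had₁]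
  · ext i j
    fin_cases i <;> fin_cases j <;>
      simp [locAutMatrix, h01, h02, h03, h04, h12, h13, h14, h24, h31, h32, h34, h42,
        hM.apply_three_three h03, hM.apply_four_four h14]

end IsLocAutMatrix

theorem isLocAutMatrix_locAutMatrix {b11 b22 b33 b41 b52 : ℂ} (b21 b31 b32 b34 b51 b54 : ℂ)
    (h : b11 * b22 * b33 * (b41 + b11) * (b22 + b52) ≠ 0) :
    IsLocAutMatrix (locAutMatrix b11 b21 b22 b31 b32 b33 b34 b41 b51 b52 b54) := by
  simp only [mul_ne_zero_iff] at h
  obtain ⟨⟨⟨⟨h11, h22⟩, h33⟩, h41⟩, h52⟩ := h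
  obtain ⟨a, ha⟩ := IsAlgClosed.exists_pow_nat_eq b22 two_pos
  obtain ⟨s, hs⟩ := IsAlgClosed.exists_pow_nat_eq (b22 + b52) two_pos
  obtain ⟨κ, hκ⟩ := IsAlgClosed.exists_pow_nat_eq b33 three_pos
  have ha0 : a ≠ 0 := ne_zero_pow two_ne_zero (ha ▸ h22)
  have hs0 : s ≠ 0 := ne_zero_pow two_ne_zero (hs ▸ h52)
  have hκ0 : κ ≠ 0 := ne_zero_pow three_ne_zero (hκ ▸ h33)
  intro x
  simp only [locAutMatrix_mulVec, autMatrix_mulVec, vecCons_inj, and_true]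
  rcases ne_or_eq (x 0) 0 with hx0 | hx0
  · refine ⟨b11, b21 + (b22 - b11 ^ 2) * x 1 / x 0,
      b31 + ((b32 - 2 * b11 * (b21 + (b22 - b11 ^ 2) * x 1 / x 0)) * x 1
        + (b33 - b11 ^ 3) * x 2) / x 0, b41,
      b51 + ((b52 - (2 * b11 * b41 + b41 ^ 2)) * x 1 + (b22 + b52 - (b11 + b41) ^ 2) * x 4) / x 0,
      b34, b54, h11, by rwa [add_comm], ?_, ?_, ?_, ?_, ?_⟩ <;> field_simp <;> ring
  simp only [hx0, mul_zero, zero_add]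
  rcases ne_or_eq (x 3) 0 with hx3 | hx3
  · refine ⟨a, 0, 0, b41 + b11 - a, 0, b34 + (b32 * x 1 + (b33 - a ^ 3) * x 2) / x 3,
      b54 + ((b52 - (2 * a * (b41 + b11 - a) + (b41 + b11 - a) ^ 2)) * x 1
        + (b22 + b52 - (b41 + b11) ^ 2) * x 4) / x 3,
      ha0, by simpa using h41, trivial, ?_, ?_, ?_, ?_⟩
    · linear_combination (-x 1) * ha
    · field_simp; ring
    · ring
    · field_simp; ring
  simp only [hx3, mul_zero, add_zero]
  rcases ne_or_eq (x 1) 0 with hx1 | hx1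
  · refine ⟨a, (b32 * x 1 + (b33 - a ^ 3) * x 2) / (2 * a * x 1), 0, s - a, 0, 0, 0,
      ha0, by simpa using hs0, trivial, ?_, ?_, trivial, ?_⟩
    · linear_combination (-x 1) * ha
    · field_simp; ring
    · linear_combination (-(x 1 + x 4)) * hs + x 1 * ha
  simp only [hx1, mul_zero, zero_add]
  exact ⟨κ, 0, 0, s - κ, 0, 0, 0, hκ0, by simpa using hs0, trivial, trivial,
    by linear_combination (-x 2) * hκ, trivial, by linear_combination (-x 4) * hs⟩

theorem isLocAutMatrix_iff (M : Matrix (Fin 5) (Fin 5) ℂ) :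
    IsLocAutMatrix M ↔
      ∃ b11 b21 b22 b31 b32 b33 b34 b41 b51 b52 b54 : ℂ,
        b11 * b22 * b33 * (b41 + b11) * (b22 + b52) ≠ 0 ∧
        M = locAutMatrix b11 b21 b22 b31 b32 b33 b34 b41 b51 b52 b54 := by
  refine ⟨IsLocAutMatrix.exists_eq_locAutMatrix, ?_⟩
  rintro ⟨b11, b21, b22, b31, b32, b33, b34, b41, b51, b52, b54, h, rfl⟩
  exact isLocAutMatrix_locAutMatrix b21 b31 b32 b34 b51 b54 h

theorem pi2_locAut_iff (Φ : (Fin 5 → ℂ) →ₗ[ℂ] (Fin 5 → ℂ)) :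
    IsPi2LocAut Φ ↔
      ∃ b11 b21 b22 b31 b32 b33 b34 b41 b51 b52 b54 : ℂ,
        b11 * b22 * b33 * (b41 + b11) * (b22 + b52) ≠ 0 ∧
        LinearMap.toMatrix' Φ =
          !![b11, 0, 0, 0, 0;
             b21, b22, 0, 0, 0;
             b31, b32, b33, b34, 0;
             b41, 0, 0, b41 + b11, 0;
             b51, b52, 0, b54, b22 + b52] :=
  (isPi2LocAut_iff_isLocAutMatrix Φ).trans (isLocAutMatrix_iff _)
end
end

section
/- A linear operator D on π₂ is a derivation of π₂ if and only if there exist complex numbers a₁₁, a₂₁, a₃₁, a₄₁, a₅₁, a₃₄, a₅₄ such that the matrix of D is [[a₁₁,0,0,0,0],[a₂₁,2a₁₁,0,0,0],[a₃₁,2a₂₁,3a₁₁,a₃₄,0],[a₄₁,0,0,a₄₁+a₁₁,0],[a₅₁,2a₄₁,0,a₅₄,2(a₄₁+a₁₁)]]. -/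
noncomputable section

/-- A derivation of `π₂`: a linear operator satisfying the Leibniz rule. -/
def IsPi2Der (D : (Fin 5 → ℂ) →ₗ[ℂ] (Fin 5 → ℂ)) : Prop :=
  ∀ x y, D (pi2Mul x y) = pi2Mul (D x) y + pi2Mul x (D y)

theorem pi2_der_iff (D : (Fin 5 → ℂ) →ₗ[ℂ] (Fin 5 → ℂ)) :
    IsPi2Der D ↔
      ∃ a11 a21 a31 a41 a51 a34 a54 : ℂ,
        LinearMap.toMatrix' D =
          !![a11, 0, 0, 0, 0;
             a21, 2 * a11, 0, 0, 0;
             a31, 2 * a21, 3 * a11, a34, 0;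
             a41, 0, 0, a41 + a11, 0;
             a51, 2 * a41, 0, a54, 2 * (a41 + a11)] := by
  set M := LinearMap.toMatrix' D with hM
  have hD : ∀ v, D v = M.mulVec v := by
    intro v
    rw [hM, ← Matrix.toLin'_apply, Matrix.toLin'_toMatrix']
  constructor
  · intro h
    have E : ∀ (x y : Fin 5 → ℂ) (i : Fin 5),
        M.mulVec (pi2Mul x y) i =
          pi2Mul (M.mulVec x) y i + pi2Mul x (M.mulVec y) i := by
      intro x y i
      rw [← hD, ← hD, ← hD, h x y]; rfl
    have e00_0 := E ![1,0,0,0,0] ![1,0,0,0,0] 0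
    have e00_1 := E ![1,0,0,0,0] ![1,0,0,0,0] 1
    have e00_2 := E ![1,0,0,0,0] ![1,0,0,0,0] 2
    have e00_3 := E ![1,0,0,0,0] ![1,0,0,0,0] 3
    have e00_4 := E ![1,0,0,0,0] ![1,0,0,0,0] 4
    have e01_0 := E ![1,0,0,0,0] ![0,1,0,0,0] 0
    have e01_1 := E ![1,0,0,0,0] ![0,1,0,0,0] 1
    have e01_2 := E ![1,0,0,0,0] ![0,1,0,0,0] 2
    have e01_3 := E ![1,0,0,0,0] ![0,1,0,0,0] 3
    have e01_4 := E ![1,0,0,0,0] ![0,1,0,0,0] 4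
    have e03_0 := E ![1,0,0,0,0] ![0,0,0,1,0] 0
    have e03_1 := E ![1,0,0,0,0] ![0,0,0,1,0] 1
    have e03_2 := E ![1,0,0,0,0] ![0,0,0,1,0] 2
    have e03_3 := E ![1,0,0,0,0] ![0,0,0,1,0] 3
    have e03_4 := E ![1,0,0,0,0] ![0,0,0,1,0] 4
    have e33_0 := E ![0,0,0,1,0] ![0,0,0,1,0] 0
    have e33_1 := E ![0,0,0,1,0] ![0,0,0,1,0] 1
    have e33_2 := E ![0,0,0,1,0] ![0,0,0,1,0] 2
    have e33_3 := E ![0,0,0,1,0] ![0,0,0,1,0] 3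
    have e33_4 := E ![0,0,0,1,0] ![0,0,0,1,0] 4
    simp [pi2Mul, Matrix.mulVec, dotProduct, Fin.sum_univ_five] at e00_0 e00_1 e00_2 e00_3 e00_4 e01_0 e01_1 e01_2 e01_3 e01_4 e03_0 e03_1 e03_2 e03_3 e03_4 e33_0 e33_1 e33_2 e33_3 e33_4
    clear E h hD
    refine ⟨M 0 0, M 1 0, M 2 0, M 3 0, M 4 0, M 2 3, M 4 3, ?_⟩
    have c01 : M 0 1 = 0 := by linear_combination e00_0
    have c11 : M 1 1 = 2 * M 0 0 := by linear_combination e00_1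
    have c21 : M 2 1 = 2 * M 1 0 := by linear_combination e00_2
    have c31 : M 3 1 = 0 := by linear_combination e00_3
    have c41 : M 4 1 = 2 * M 3 0 := by linear_combination e00_4
    have c02 : M 0 2 = 0 := by linear_combination e01_0
    have c12 : M 1 2 = 0 := by linear_combination e01_1 + c01
    have c22 : M 2 2 = 3 * M 0 0 := by linear_combination e01_2 + c11
    have c32 : M 3 2 = 0 := by linear_combination e01_3
    have c42 : M 4 2 = 0 := by linear_combination e01_4 + c31
    have c03 : M 0 3 = 0 := by linear_combination e33_1 - e03_1
    have c13 : M 1 3 = 0 := by linear_combination e33_2 - e03_2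
    have c33 : M 3 3 = M 3 0 + M 0 0 := by linear_combination e03_4 - e33_4 - 2 * c03
    have c04 : M 0 4 = 0 := by linear_combination e33_0
    have c14 : M 1 4 = 0 := by linear_combination e33_1
    have c24 : M 2 4 = 0 := by linear_combination e33_2
    have c34 : M 3 4 = 0 := by linear_combination e33_3
    have c44 : M 4 4 = 2 * (M 3 0 + M 0 0) := by
      linear_combination e33_4 + 2 * c03 + 2 * c33
    ext i j
    fin_cases i <;> fin_cases j <;>
      simp only [Matrix.cons_val', Matrix.cons_val_zero, Matrix.cons_val_one,
        Matrix.head_cons, Matrix.empty_val', Matrix.cons_val_fin_one,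
        Matrix.head_fin_const, Matrix.cons_val_two, Matrix.tail_cons,
        Matrix.cons_val_three, Matrix.cons_val_four, Matrix.of_apply, Fin.isValue] <;>
      first
        | rfl
        | exact c01 | exact c11 | exact c21 | exact c31 | exact c41
        | exact c02 | exact c12 | exact c22 | exact c32 | exact c42
        | exact c03 | exact c13 | exact c33
        | exact c04 | exact c14 | exact c24 | exact c34 | exact c44
  · rintro ⟨a11, a21, a31, a41, a51, a34, a54, hMeq⟩
    intro x y
    funext i
    rw [hD, hD, hD, hMeq]
    fin_cases i <;>
      simp [pi2Mul, Matrix.mulVec, dotProduct, Fin.sum_univ_five] <;>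
      ring
end
end

section
/- A linear operator ∇ on π₂ is a local derivation of π₂ if and only if there exist complex numbers b₁₁, b₂₁, b₂₂, b₃₁, b₃₂, b₃₃, b₃₄, b₄₁, b₅₁, b₅₂, b₅₄ such that the matrix of ∇ is [[b₁₁,0,0,0,0],[b₂₁,b₂₂,0,0,0],[b₃₁,b₃₂,b₃₃,b₃₄,0],[b₄₁,0,0,b₄₁+b₁₁,0],[b₅₁,b₅₂,0,b₅₄,b₂₂+b₅₂]]. -/
noncomputable section

/-- A local derivation of `π₂`: a linear operator that agrees at every point with
some derivation (depending on the point). -/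
def IsPi2LocDer (f : (Fin 5 → ℂ) →ₗ[ℂ] (Fin 5 → ℂ)) : Prop :=
  ∀ x : Fin 5 → ℂ, ∃ D : (Fin 5 → ℂ) →ₗ[ℂ] (Fin 5 → ℂ), IsPi2Der D ∧ f x = D x

/-! Since `π₂` is generated by `e₁` and `e₄` (with `e₂ = e₁²`, `e₃ = e₁³`, `e₅ = e₄²`), a derivation
is determined by `D e₁` and `D e₄`, and the Leibniz rule on `e₁e₁`, `e₁e₂`, `e₁e₄`, `e₄e₄` shows that
the derivations are exactly the operators with matrix `pi2DerMatrix u w p v q r s`.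
Evaluating a local derivation at `e₂, …, e₅` forces the zeros of the columns `2, …, 5` of such a
matrix, and evaluating it at `e₁ - e₄` and `e₂ - e₅` gives the two relations on the diagonal.
Conversely, for `B = pi2LocDerMatrix …` and a fixed `x`, the equation `B x = D x` is a triangular
linear system in the parameters of `D`, solved by dividing by the first nonzero coordinate among `x₁, x₄, x₂`
(or directly when all three vanish). -/

open Matrix

def pi2DerMatrix (u w p v q r s : ℂ) : Matrix (Fin 5) (Fin 5) ℂ :=
  !![u, 0, 0, 0, 0;
     w, 2 * u, 0, 0, 0;
     p, 2 * w, 3 * u, r, 0;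
     v, 0, 0, u + v, 0;
     q, 2 * v, 0, s, 2 * u + 2 * v]

def pi2LocDerMatrix (b11 b21 b22 b31 b32 b33 b34 b41 b51 b52 b54 : ℂ) :
    Matrix (Fin 5) (Fin 5) ℂ :=
  !![b11, 0, 0, 0, 0;
     b21, b22, 0, 0, 0;
     b31, b32, b33, b34, 0;
     b41, 0, 0, b41 + b11, 0;
     b51, b52, 0, b54, b22 + b52]

@[simp]
lemma pi2DerMatrix_mulVec (u w p v q r s : ℂ) (x : Fin 5 → ℂ) :
    pi2DerMatrix u w p v q r s *ᵥ x =
      ![u * x 0,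
        w * x 0 + 2 * u * x 1,
        p * x 0 + 2 * w * x 1 + 3 * u * x 2 + r * x 3,
        v * x 0 + (u + v) * x 3,
        q * x 0 + 2 * v * x 1 + s * x 3 + (2 * u + 2 * v) * x 4] := by
  ext i
  fin_cases i <;> simp [pi2DerMatrix, mulVec, dotProduct, Fin.sum_univ_five]

@[simp]
lemma pi2LocDerMatrix_mulVec (b11 b21 b22 b31 b32 b33 b34 b41 b51 b52 b54 : ℂ)
    (x : Fin 5 → ℂ) :
    pi2LocDerMatrix b11 b21 b22 b31 b32 b33 b34 b41 b51 b52 b54 *ᵥ x =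
      ![b11 * x 0,
        b21 * x 0 + b22 * x 1,
        b31 * x 0 + b32 * x 1 + b33 * x 2 + b34 * x 3,
        b41 * x 0 + (b41 + b11) * x 3,
        b51 * x 0 + b52 * x 1 + b54 * x 3 + (b22 + b52) * x 4] := by
  ext i
  fin_cases i <;> simp [pi2LocDerMatrix, mulVec, dotProduct, Fin.sum_univ_five]

lemma isPi2Der_toLin'_pi2DerMatrix (u w p v q r s : ℂ) :
    IsPi2Der (toLin' (pi2DerMatrix u w p v q r s)) := by
  intro x y
  ext i
  fin_cases i <;> simp [pi2Mul] <;> ring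

lemma pi2Mul_single_zero_single_zero :
    pi2Mul (Pi.single 0 1) (Pi.single 0 1) = Pi.single 1 1 := by
  ext i; fin_cases i <;> simp [pi2Mul]

lemma pi2Mul_single_zero_single_one :
    pi2Mul (Pi.single 0 1) (Pi.single 1 1) = Pi.single 2 1 := by
  ext i; fin_cases i <;> simp [pi2Mul]

lemma pi2Mul_single_zero_single_three :
    pi2Mul (Pi.single 0 1) (Pi.single 3 1) = Pi.single 4 1 := by
  ext i; fin_cases i <;> simp [pi2Mul]

lemma pi2Mul_single_three_single_three :
    pi2Mul (Pi.single 3 1) (Pi.single 3 1) = Pi.single 4 1 := by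
  ext i; fin_cases i <;> simp [pi2Mul]

lemma IsPi2Der.eq_toLin'_pi2DerMatrix {D : (Fin 5 → ℂ) →ₗ[ℂ] (Fin 5 → ℂ)} (hD : IsPi2Der D) :
    ∃ u w p v q r s, D = toLin' (pi2DerMatrix u w p v q r s) := by
  set a := D (Pi.single 0 1)
  set d := D (Pi.single 3 1)
  have h1 : D (Pi.single 1 1) = ![0, 2 * a 0, 2 * a 1, 0, 2 * a 3] := by
    rw [← pi2Mul_single_zero_single_zero, hD]
    ext k; fin_cases k <;> simp [pi2Mul] <;> ring
  have h2 : D (Pi.single 2 1) = ![0, 0, 3 * a 0, 0, 0] := by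
    rw [← pi2Mul_single_zero_single_one, hD, h1]
    ext k; fin_cases k <;> simp [pi2Mul]
    ring
  have h4 : D (Pi.single 4 1) = ![0, d 0, d 1, 0, a 0 + a 3 + d 3] := by
    rw [← pi2Mul_single_zero_single_three, hD]
    ext k; fin_cases k <;> simp [pi2Mul] <;> ring
  have h4' : D (Pi.single 4 1) = ![0, 0, 0, 0, 2 * d 0 + 2 * d 3] := by
    rw [← pi2Mul_single_three_single_three, hD]
    ext k; fin_cases k <;> simp [pi2Mul]
    ring
  obtain ⟨hd0, hd1, hd3⟩ : d 0 = 0 ∧ d 1 = 0 ∧ d 3 = a 0 + a 3 := by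
    simp only [h4', vecCons_inj] at h4
    refine ⟨h4.2.1.symm, h4.2.2.1.symm, ?_⟩
    linear_combination h4.2.2.2.2.1 + 2 * h4.2.1
  refine ⟨a 0, a 1, a 2, a 3, a 4, d 2, d 4, (Pi.basisFun ℂ (Fin 5)).ext fun j => ?_⟩
  rw [Pi.basisFun_apply, toLin'_apply, pi2DerMatrix_mulVec]
  ext k
  fin_cases j <;> fin_cases k <;> simp [h1, h2, h4', hd0, hd1, hd3, a, d, mul_add]

lemma isPi2LocDer_iff_forall_exists_pi2DerMatrix_mulVec (f : (Fin 5 → ℂ) →ₗ[ℂ] (Fin 5 → ℂ)) :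
    IsPi2LocDer f ↔ ∀ x, ∃ u w p v q r s, f x = pi2DerMatrix u w p v q r s *ᵥ x := by
  refine forall_congr' fun x => ⟨?_, ?_⟩
  · rintro ⟨D, hD, hfx⟩
    obtain ⟨u, w, p, v, q, r, s, rfl⟩ := hD.eq_toLin'_pi2DerMatrix
    exact ⟨u, w, p, v, q, r, s, hfx⟩
  · rintro ⟨u, w, p, v, q, r, s, hfx⟩
    exact ⟨_, isPi2Der_toLin'_pi2DerMatrix u w p v q r s, hfx⟩

lemma IsPi2LocDer.exists_toMatrix'_eq_pi2LocDerMatrix {f : (Fin 5 → ℂ) →ₗ[ℂ] (Fin 5 → ℂ)}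
    (hf : IsPi2LocDer f) :
    ∃ b11 b21 b22 b31 b32 b33 b34 b41 b51 b52 b54,
      LinearMap.toMatrix' f = pi2LocDerMatrix b11 b21 b22 b31 b32 b33 b34 b41 b51 b52 b54 := by
  choose u w p v q r s hfx using (isPi2LocDer_iff_forall_exists_pi2DerMatrix_mulVec f).1 hf
  set M := LinearMap.toMatrix' f
  have hM : ∀ i j, M i j = f (Pi.single j 1) i := LinearMap.toMatrix'_apply f
  have h03 := congrFun (map_sub f (Pi.single 0 1) (Pi.single 3 1))
  have h14 := congrFun (map_sub f (Pi.single 1 1) (Pi.single 4 1))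
  simp only [hfx, pi2DerMatrix_mulVec] at hM h03 h14
  have rel03 : M 3 3 = M 3 0 + M 0 0 := by
    have e0 := h03 0
    have e3 := h03 3
    simp only [hM, Pi.sub_apply, Pi.single_apply, cons_val, Fin.reduceEq, if_true, if_false] at e0 e3 ⊢
    linear_combination e3 + e0
  have rel14 : M 4 4 = M 1 1 + M 4 1 := by
    have e1 := h14 1
    have e4 := h14 4
    simp only [hM, Pi.sub_apply, Pi.single_apply, cons_val, Fin.reduceEq, if_true, if_false] at e1 e4 ⊢
    linear_combination e4 + e1
  refine ⟨M 0 0, M 1 0, M 1 1, M 2 0, M 2 1, M 2 2, M 2 3, M 3 0, M 4 0, M 4 1, M 4 3, ?_⟩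
  ext i j
  fin_cases i <;> fin_cases j
  all_goals first | rfl | exact rel03 | exact rel14 | simp [hM, pi2LocDerMatrix]

lemma isPi2LocDer_toLin'_pi2LocDerMatrix (b11 b21 b22 b31 b32 b33 b34 b41 b51 b52 b54 : ℂ) :
    IsPi2LocDer (toLin' (pi2LocDerMatrix b11 b21 b22 b31 b32 b33 b34 b41 b51 b52 b54)) := by
  refine (isPi2LocDer_iff_forall_exists_pi2DerMatrix_mulVec _).2 fun x => ?_
  simp only [toLin'_apply, pi2LocDerMatrix_mulVec, pi2DerMatrix_mulVec, vecCons_inj, and_true]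
  rcases ne_or_eq (x 0) 0 with hx0 | hx0
  · obtain ⟨w, hw⟩ : ∃ w, w * x 0 = b21 * x 0 + (b22 - 2 * b11) * x 1 := ⟨_, div_mul_cancel₀ _ hx0⟩
    obtain ⟨p, hp⟩ : ∃ p, p * x 0 = b31 * x 0 + (b32 - 2 * w) * x 1 + (b33 - 3 * b11) * x 2 :=
      ⟨_, div_mul_cancel₀ _ hx0⟩
    obtain ⟨q, hq⟩ : ∃ q, q * x 0 =
        b51 * x 0 + (b52 - 2 * b41) * x 1 + (b22 + b52 - 2 * b11 - 2 * b41) * x 4 :=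
      ⟨_, div_mul_cancel₀ _ hx0⟩
    exact ⟨b11, w, p, b41, q, b34, b54, rfl, by linear_combination -hw, by linear_combination -hp,
      by ring, by linear_combination -hq⟩
  rw [hx0]
  rcases ne_or_eq (x 3) 0 with hx3 | hx3
  · obtain ⟨r, hr⟩ : ∃ r, r * x 3 = b32 * x 1 + (b33 - 3 / 2 * b22) * x 2 + b34 * x 3 :=
      ⟨_, div_mul_cancel₀ _ hx3⟩
    obtain ⟨s, hs⟩ : ∃ s, s * x 3 = (b22 + b52 - 2 * b11 - 2 * b41) * (x 1 + x 4) + b54 * x 3 :=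
      ⟨_, div_mul_cancel₀ _ hx3⟩
    exact ⟨b22 / 2, 0, 0, b11 + b41 - b22 / 2, 0, r, s, by ring, by ring,
      by linear_combination -hr, by ring, by linear_combination -hs⟩
  rw [hx3]
  rcases ne_or_eq (x 1) 0 with hx1 | hx1
  · obtain ⟨w, hw⟩ : ∃ w, w * (2 * x 1) = b32 * x 1 + (b33 - 3 / 2 * b22) * x 2 :=
      ⟨_, div_mul_cancel₀ _ (mul_ne_zero two_ne_zero hx1)⟩
    exact ⟨b22 / 2, w, 0, b52 / 2, 0, 0, 0, by ring, by ring, by linear_combination -hw, by ring,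
      by ring⟩
  · rw [hx1]
    exact ⟨b33 / 3, 0, 0, (b22 + b52) / 2 - b33 / 3, 0, 0, 0, by ring, by ring, by ring, by ring,
      by ring⟩

theorem pi2_locDer_iff (f : (Fin 5 → ℂ) →ₗ[ℂ] (Fin 5 → ℂ)) :
    IsPi2LocDer f ↔
      ∃ b11 b21 b22 b31 b32 b33 b34 b41 b51 b52 b54 : ℂ,
        LinearMap.toMatrix' f =
          !![b11, 0, 0, 0, 0;
             b21, b22, 0, 0, 0;
             b31, b32, b33, b34, 0;
             b41, 0, 0, b41 + b11, 0;
             b51, b52, 0, b54, b22 + b52] := by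
  refine ⟨IsPi2LocDer.exists_toMatrix'_eq_pi2LocDerMatrix, ?_⟩
  rintro ⟨b11, b21, b22, b31, b32, b33, b34, b41, b51, b52, b54, hf⟩
  rw [← toLin'_toMatrix' f, hf]
  exact isPi2LocDer_toLin'_pi2LocDerMatrix b11 b21 b22 b31 b32 b33 b34 b41 b51 b52 b54
end
end

section
/- The set of all local derivations of π₂ is a Lie subalgebra of the Lie algebra of linear endomorphisms of π₂: it is a complex linear subspace, and for any two local derivations ∇ and Δ of π₂, the commutator [∇,Δ] = ∇∘Δ − Δ∘∇ is again a local derivation of π₂. -/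
/-!
Leibniz's rule on pairs of basis vectors forces every derivation of `π₂` into the
seven-parameter family `derMatrix`, all of whose members are derivations. Evaluating a local
derivation at `e₂, …, e₅`, `e₄ - e₁` and `e₂ - e₅` shows that its matrix `A` is fixed by the
projection `locDerProj`, which keeps eleven entries. Conversely, if `A` is fixed by it, then
`A x = D x` can be solved for a derivation `D` at each `x`, dividing by the first nonzero
coordinate of `x` along `e₁`, `e₄`, `e₂` (if there is none, no division is needed). So the local
derivations are the fixed points of the linear map `locDerProj`, and closure under the commutator
is a matrix computation.
-/

noncomputable section

open Matrix

def derMatrix (a b c d e g h : ℂ) : Matrix (Fin 5) (Fin 5) ℂ :=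
  !![a, 0, 0, 0, 0;
     b, 2 * a, 0, 0, 0;
     c, 2 * b, 3 * a, d, 0;
     e - a, 0, 0, e, 0;
     g, 2 * (e - a), 0, h, 2 * e]

theorem derMatrix_mulVec (a b c d e g h : ℂ) (x : Fin 5 → ℂ) :
    derMatrix a b c d e g h *ᵥ x =
      ![a * x 0, b * x 0 + 2 * a * x 1, c * x 0 + 2 * b * x 1 + 3 * a * x 2 + d * x 3,
        (e - a) * x 0 + e * x 3, g * x 0 + 2 * (e - a) * x 1 + h * x 3 + 2 * e * x 4] := by
  ext i
  fin_cases i <;> simp [derMatrix, mulVec, dotProduct, Fin.sum_univ_five]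

theorem isPi2Der_toLin'_iff {M : Matrix (Fin 5) (Fin 5) ℂ} :
    IsPi2Der (toLin' M) ↔ ∃ a b c d e g h, M = derMatrix a b c d e g h := by
  constructor
  · intro hM
    have h00 := hM (Pi.single 0 1) (Pi.single 0 1)
    have h01 := hM (Pi.single 0 1) (Pi.single 1 1)
    have h03 := hM (Pi.single 0 1) (Pi.single 3 1)
    have h04 := hM (Pi.single 0 1) (Pi.single 4 1)
    have h13 := hM (Pi.single 1 1) (Pi.single 3 1)
    have h33 := hM (Pi.single 3 1) (Pi.single 3 1)
    simp [funext_iff, Fin.forall_fin_succ, pi2Mul, mulVec, dotProduct, Fin.sum_univ_five]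
      at h00 h01 h03 h04 h13 h33
    refine ⟨M 0 0, M 1 0, M 2 0, M 2 3, M 3 3, M 4 0, M 4 3, ?_⟩
    ext i j
    fin_cases i <;> fin_cases j <;> simp [derMatrix] <;> grind
  · rintro ⟨a, b, c, d, e, g, h, rfl⟩ x y
    ext i
    fin_cases i <;> simp [derMatrix, pi2Mul, mulVec, dotProduct, Fin.sum_univ_five] <;> ring

theorem isPi2LocDer_iff_forall_exists_derMatrix (f : (Fin 5 → ℂ) →ₗ[ℂ] (Fin 5 → ℂ)) :
    IsPi2LocDer f ↔
      ∀ x, ∃ a b c d e g h, LinearMap.toMatrix' f *ᵥ x = derMatrix a b c d e g h *ᵥ x := by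
  refine forall_congr' fun x => ⟨?_, ?_⟩
  · rintro ⟨D, hD, hx⟩
    rw [← toLin'_toMatrix' D, isPi2Der_toLin'_iff] at hD
    obtain ⟨a, b, c, d, e, g, h, hM⟩ := hD
    refine ⟨a, b, c, d, e, g, h, ?_⟩
    rw [LinearMap.toMatrix'_mulVec, hx, ← hM, LinearMap.toMatrix'_mulVec]
  · rintro ⟨a, b, c, d, e, g, h, hx⟩
    refine ⟨_, isPi2Der_toLin'_iff.mpr ⟨a, b, c, d, e, g, h, rfl⟩, ?_⟩
    rwa [LinearMap.toMatrix'_mulVec] at hx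

def locDerProj : Matrix (Fin 5) (Fin 5) ℂ →ₗ[ℂ] Matrix (Fin 5) (Fin 5) ℂ where
  toFun A :=
    !![A 3 3 - A 3 0, 0, 0, 0, 0;
       A 1 0, A 4 4 - A 4 1, 0, 0, 0;
       A 2 0, A 2 1, A 2 2, A 2 3, 0;
       A 3 0, 0, 0, A 3 3, 0;
       A 4 0, A 4 1, 0, A 4 3, A 4 4]
  map_add' A B := by ext i j; fin_cases i <;> fin_cases j <;> simp <;> ring
  map_smul' c A := by ext i j; fin_cases i <;> fin_cases j <;> simp <;> ring

theorem locDerProj_mulVec (A : Matrix (Fin 5) (Fin 5) ℂ) (x : Fin 5 → ℂ) :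
    locDerProj A *ᵥ x =
      ![(A 3 3 - A 3 0) * x 0, A 1 0 * x 0 + (A 4 4 - A 4 1) * x 1,
        A 2 0 * x 0 + A 2 1 * x 1 + A 2 2 * x 2 + A 2 3 * x 3, A 3 0 * x 0 + A 3 3 * x 3,
        A 4 0 * x 0 + A 4 1 * x 1 + A 4 3 * x 3 + A 4 4 * x 4] := by
  ext i
  fin_cases i <;> simp [locDerProj, mulVec, dotProduct, Fin.sum_univ_five]

theorem locDerProj_eq_self_of_forall_exists_derMatrix {A : Matrix (Fin 5) (Fin 5) ℂ}
    (hA : ∀ x, ∃ a b c d e g h, A *ᵥ x = derMatrix a b c d e g h *ᵥ x) :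
    locDerProj A = A := by
  obtain ⟨_, _, _, _, _, _, _, h1⟩ := hA (Pi.single 1 1)
  obtain ⟨_, _, _, _, _, _, _, h2⟩ := hA (Pi.single 2 1)
  obtain ⟨_, _, _, _, _, _, _, h3⟩ := hA (Pi.single 3 1)
  obtain ⟨_, _, _, _, _, _, _, h4⟩ := hA (Pi.single 4 1)
  obtain ⟨_, _, _, _, _, _, _, h30⟩ := hA (Pi.single 3 1 - Pi.single 0 1)
  obtain ⟨_, _, _, _, _, _, _, h14⟩ := hA (Pi.single 1 1 - Pi.single 4 1)
  simp [funext_iff, Fin.forall_fin_succ, derMatrix, mulVec, dotProduct, Fin.sum_univ_five]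
    at h1 h2 h3 h4 h30 h14
  ext i j
  fin_cases i <;> fin_cases j <;> simp [locDerProj] <;> grind

theorem exists_derMatrix_mulVec_eq {A : Matrix (Fin 5) (Fin 5) ℂ} (hA : locDerProj A = A)
    (x : Fin 5 → ℂ) : ∃ a b c d e g h, A *ᵥ x = derMatrix a b c d e g h *ᵥ x := by
  rw [← hA]
  simp only [locDerProj_mulVec, derMatrix_mulVec, vecCons_inj, and_true]
  by_cases hx0 : x 0 = 0
  · by_cases hx3 : x 3 = 0
    · by_cases hx1 : x 1 = 0
      · refine ⟨A 2 2 / 3, 0, 0, 0, A 4 4 / 2, 0, 0, ?_⟩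
        simp only [hx0, hx1, hx3]
        refine ⟨?_, ?_, ?_, ?_, ?_⟩ <;> ring
      · refine ⟨(A 4 4 - A 4 1) / 2,
          (A 2 1 * x 1 + (A 2 2 - 3 * ((A 4 4 - A 4 1) / 2)) * x 2) / (2 * x 1),
          0, 0, A 4 4 / 2, 0, 0, ?_⟩
        simp only [hx0, hx3]
        refine ⟨?_, ?_, ?_, ?_, ?_⟩ <;> field_simp <;> ring
    · refine ⟨(A 4 4 - A 4 1) / 2, 0, 0,
        (A 2 1 * x 1 + (A 2 2 - 3 * ((A 4 4 - A 4 1) / 2)) * x 2 + A 2 3 * x 3) / x 3, A 3 3, 0,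
        (A 4 3 * x 3 + (A 4 4 - 2 * A 3 3) * (x 1 + x 4)) / x 3, ?_⟩
      simp only [hx0]
      refine ⟨?_, ?_, ?_, ?_, ?_⟩ <;> field_simp <;> ring
  · obtain ⟨b, hb⟩ :
        ∃ b, b * x 0 + 2 * (A 3 3 - A 3 0) * x 1 = A 1 0 * x 0 + (A 4 4 - A 4 1) * x 1 :=
      ⟨(A 1 0 * x 0 + (A 4 4 - A 4 1 - 2 * (A 3 3 - A 3 0)) * x 1) / x 0, by field_simp; ring⟩
    refine ⟨A 3 3 - A 3 0, b,
      (A 2 0 * x 0 + (A 2 1 - 2 * b) * x 1 + (A 2 2 - 3 * (A 3 3 - A 3 0)) * x 2) / x 0,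
      A 2 3, A 3 3, (A 4 0 * x 0 + (A 4 1 - 2 * A 3 0) * x 1 + (A 4 4 - 2 * A 3 3) * x 4) / x 0,
      A 4 3, ?_⟩
    refine ⟨?_, hb.symm, ?_, ?_, ?_⟩ <;> field_simp <;> ring

theorem isPi2LocDer_iff_locDerProj (f : (Fin 5 → ℂ) →ₗ[ℂ] (Fin 5 → ℂ)) :
    IsPi2LocDer f ↔ locDerProj (LinearMap.toMatrix' f) = LinearMap.toMatrix' f := by
  rw [isPi2LocDer_iff_forall_exists_derMatrix]
  exact ⟨locDerProj_eq_self_of_forall_exists_derMatrix, exists_derMatrix_mulVec_eq⟩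

theorem locDerProj_commutator {A B : Matrix (Fin 5) (Fin 5) ℂ} (hA : locDerProj A = A)
    (hB : locDerProj B = B) : locDerProj (A * B - B * A) = A * B - B * A := by
  have hA' := congrFun₂ hA
  have hB' := congrFun₂ hB
  simp only [locDerProj, LinearMap.coe_mk, AddHom.coe_mk, of_apply, cons_val', cons_val_fin_one,
    Fin.forall_fin_succ, cons_val_zero, cons_val_succ, Fin.succ_zero_eq_one, Fin.succ_one_eq_two,
    Fin.reduceSucc, IsEmpty.forall_iff, and_true, true_and, and_self] at hA' hB'
  ext i j
  fin_cases i <;> fin_cases j <;> simp [locDerProj, mul_apply, Fin.sum_univ_five] <;> grind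

/-- The local derivations of `π₂` form a complex linear subspace of the space of
linear endomorphisms of `π₂` which is closed under the commutator bracket, i.e.,
a Lie subalgebra of the Lie algebra of linear endomorphisms. -/
theorem pi2_locDer_lieAlgebra :
    (∃ S : Submodule ℂ ((Fin 5 → ℂ) →ₗ[ℂ] (Fin 5 → ℂ)),
        (S : Set ((Fin 5 → ℂ) →ₗ[ℂ] (Fin 5 → ℂ))) = {f | IsPi2LocDer f}) ∧
    (∀ f g : (Fin 5 → ℂ) →ₗ[ℂ] (Fin 5 → ℂ), IsPi2LocDer f → IsPi2LocDer g →
        IsPi2LocDer (f ∘ₗ g - g ∘ₗ f)) := by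
  refine ⟨⟨(LinearMap.eqLocus locDerProj LinearMap.id).comap
    (LinearMap.toMatrix' : _ ≃ₗ[ℂ] Matrix (Fin 5) (Fin 5) ℂ).toLinearMap, ?_⟩, ?_⟩
  · ext f
    exact (isPi2LocDer_iff_locDerProj f).symm
  · intro f g hf hg
    rw [isPi2LocDer_iff_locDerProj] at hf hg ⊢
    rw [map_sub, LinearMap.toMatrix'_comp, LinearMap.toMatrix'_comp]
    exact locDerProj_commutator hf hg
end
end

section
/- There exists a linear operator on π₂ which is a local automorphism of π₂ but is not an automorphism of π₂. -/
noncomputable section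

/-- The family of automorphisms `ψ_c : x ↦ (x₀, x₁, x₂ + c x₀, x₃, x₄)`. -/
def psiAux (c : ℂ) : (Fin 5 → ℂ) →ₗ[ℂ] (Fin 5 → ℂ) where
  toFun x := ![x 0, x 1, x 2 + c * x 0, x 3, x 4]
  map_add' x y := by funext i; fin_cases i <;> simp <;> ring
  map_smul' a x := by funext i; fin_cases i <;> simp <;> ring

/-- The automorphism `φ : x ↦ (x₀, x₁ + x₀/2, x₂ + x₁, x₃, x₄)`. -/
def phiAux : (Fin 5 → ℂ) →ₗ[ℂ] (Fin 5 → ℂ) where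
  toFun x := ![x 0, x 1 + x 0 / 2, x 2 + x 1, x 3, x 4]
  map_add' x y := by funext i; fin_cases i <;> simp <;> ring
  map_smul' a x := by funext i; fin_cases i <;> simp <;> ring

/-- The local automorphism that is not an automorphism. -/
def PhiAux : (Fin 5 → ℂ) →ₗ[ℂ] (Fin 5 → ℂ) where
  toFun x := ![x 0, x 1, x 2 + x 1, x 3, x 4]
  map_add' x y := by funext i; fin_cases i <;> simp <;> ring
  map_smul' a x := by funext i; fin_cases i <;> simp <;> ring

lemma psiAux_aut (c : ℂ) : IsPi2Aut (psiAux c) := by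
  constructor
  · refine Function.bijective_iff_has_inverse.mpr
      ⟨fun x => ![x 0, x 1, x 2 - c * x 0, x 3, x 4], ?_, ?_⟩ <;>
    · intro x; funext i; fin_cases i <;> simp [psiAux] <;> ring
  · intro x y
    funext i
    fin_cases i <;> simp [psiAux, pi2Mul] <;> ring

lemma phiAux_aut : IsPi2Aut phiAux := by
  constructor
  · refine Function.bijective_iff_has_inverse.mpr
      ⟨fun x => ![x 0, x 1 - x 0 / 2, x 2 - x 1 + x 0 / 2, x 3, x 4], ?_, ?_⟩ <;>
    · intro x; funext i; fin_cases i <;> simp [phiAux] <;> ring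
  · intro x y
    funext i
    fin_cases i <;> simp [phiAux, pi2Mul] <;> ring

/-- There is a local automorphism of `π₂` which is not an automorphism. -/
theorem exists_pi2_locAut_not_aut :
    ∃ Φ : (Fin 5 → ℂ) →ₗ[ℂ] (Fin 5 → ℂ), IsPi2LocAut Φ ∧ ¬ IsPi2Aut Φ := by
  refine ⟨PhiAux, ?_, ?_⟩
  · intro x
    by_cases h : x 0 = 0
    · refine ⟨phiAux, phiAux_aut, ?_⟩
      funext i
      fin_cases i <;> simp [PhiAux, phiAux, h]
    · refine ⟨psiAux (x 1 / x 0), psiAux_aut _, ?_⟩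
      funext i
      fin_cases i <;> simp [PhiAux, psiAux]
      field_simp
  · rintro ⟨-, hm⟩
    have := congrFun (hm ![1, 0, 0, 0, 0] ![1, 0, 0, 0, 0]) 2
    simp [PhiAux, pi2Mul] at this
end
end

section
/- There exists a linear operator on π₂ which is a local derivation of π₂ but is not a derivation of π₂. -/
noncomputable section

/-- A family of linear maps on `π₂`. -/
def Lmap (a b c : ℂ) : (Fin 5 → ℂ) →ₗ[ℂ] (Fin 5 → ℂ) where
  toFun x := ![0, a * x 0, b * x 0 + c * x 1, 0, 0]
  map_add' x y := by
    funext i; fin_cases i <;> simp <;> ring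
  map_smul' r x := by
    funext i; fin_cases i <;> simp <;> ring

lemma lmap_der (a b : ℂ) : IsPi2Der (Lmap a b (2 * a)) := by
  intro x y
  funext i
  fin_cases i <;> simp [Lmap, pi2Mul] <;> ring

/-- There is a local derivation of `π₂` which is not a derivation. -/
theorem exists_pi2_locDer_not_der :
    ∃ f : (Fin 5 → ℂ) →ₗ[ℂ] (Fin 5 → ℂ), IsPi2LocDer f ∧ ¬ IsPi2Der f := by
  refine ⟨Lmap 0 0 1, ?_, ?_⟩
  · intro x
    by_cases h : x 0 = 0
    · refine ⟨Lmap (1/2) 0 (2 * (1/2)), lmap_der _ _, ?_⟩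
      funext i
      fin_cases i <;> simp [Lmap, h] <;> ring
    · refine ⟨Lmap 0 (x 1 / x 0) (2 * 0), lmap_der _ _, ?_⟩
      funext i
      fin_cases i <;> simp [Lmap]
      rw [div_mul_cancel₀ _ h]
  · intro hD
    have := congrFun (hD ![1,0,0,0,0] ![1,0,0,0,0]) 2
    simp [Lmap, pi2Mul] at this
end
end
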